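/- Let x and y be elements of (Z/4Z)^n whose reductions mod 2 are orthogonal binary vectors and suppose x·y = 0 in Z/4Z. Then the Euclidean weight of x + y is congruent to wtE(x) + wtE(y) modulo 8. -/
import Mathlib


open Finset

/-- Euclidean weight of a vector over `ZMod 4`: `n1 + 4*n2 + n3`. -/
def euclWt {n : ℕ} (x : Fin n → ZMod 4) : ℕ :=
  (univ.filter fun i => x i = 1).card + 4 * (univ.filter fun i => x i = 2).card
    + (univ.filter fun i => x i = 3).card

/-- A `ZMod 4`-code is self-dual if it equals its dual under the standard inner product. -/
def IsSelfDualZ4 {n : ℕ} (C : Submodule (ZMod 4) (Fin n → ZMod 4)) : Prop :=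
  ∀ x, x ∈ C ↔ ∀ y ∈ C, ∑ i, x i * y i = 0

/-- reduction mod 2 -/
def res : ZMod 4 →+* ZMod 2 := ZMod.castHom (by norm_num : (2:ℕ) ∣ 4) (ZMod 2)

/-- The lattice `A₄(C) = (1/2){x ∈ ℤⁿ : x mod 4 ∈ C}`, as a subset of `ℝⁿ`. -/
def A4 {n : ℕ} (C : Submodule (ZMod 4) (Fin n → ZMod 4)) : Set (Fin n → ℝ) :=
  {y | ∃ x : Fin n → ℤ, (∀ i, y i = (x i : ℝ) / 2) ∧ (fun i => (x i : ZMod 4)) ∈ C}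

lemma euclWt_eq {n : ℕ} (z : Fin n → ZMod 4) :
    euclWt z = ∑ i, (z i).val ^ 2 % 8 := by
  have key : ∀ a : ZMod 4,
      (if a = 1 then 1 else 0) + 4 * (if a = 2 then 1 else 0) + (if a = 3 then 1 else 0)
        = a.val ^ 2 % 8 := by decide
  unfold euclWt
  simp only [card_filter, mul_sum, ← sum_add_distrib]
  exact sum_congr rfl fun i _ => key (z i)

lemma cast_euclWt {n : ℕ} (z : Fin n → ZMod 4) :
    ((euclWt z : ℕ) : ZMod 8) = ∑ i, ((z i).val : ZMod 8) ^ 2 := by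
  rw [euclWt_eq]
  push_cast
  exact sum_congr rfl fun i _ => by rw [ZMod.natCast_mod]; push_cast; ring

/-- If `x·y = 0` in `ZMod 4` and the reductions of `x, y` mod 2 are orthogonal,
then `wtE(x+y) ≡ wtE(x) + wtE(y) (mod 8)`. -/
theorem stmt18 {n : ℕ} (x y : Fin n → ZMod 4)
    (h2 : ∑ i, res (x i) * res (y i) = 0)
    (h4 : ∑ i, x i * y i = 0) :
    euclWt (x + y) ≡ euclWt x + euclWt y [MOD 8] := by
  rw [← ZMod.natCast_eq_natCast_iff]
  push_cast
  rw [cast_euclWt, cast_euclWt, cast_euclWt]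
  have carry : ∀ a b : ZMod 4,
      (((a + b).val : ZMod 8)) ^ 2 = ((a.val : ZMod 8) + (b.val : ZMod 8)) ^ 2 := by decide
  have hs : (2 * ∑ i, ((x i).val : ZMod 8) * ((y i).val : ZMod 8)) = 0 := by
    have h4' : ((∑ i, (x i).val * (y i).val : ℕ) : ZMod 4) = 0 := by
      push_cast
      simpa using h4
    obtain ⟨k, hk⟩ := (ZMod.natCast_eq_zero_iff _ _).mp h4'
    have : ((2 * ∑ i, (x i).val * (y i).val : ℕ) : ZMod 8) = 0 := by
      rw [hk]
      push_cast
      have h8 : ((8 : ℕ) : ZMod 8) = 0 := by decide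
      calc ((2 : ZMod 8) * ((4:ℕ) * k)) = ((8:ℕ):ZMod 8) * k := by push_cast; ring
        _ = 0 := by rw [h8, zero_mul]
    simpa using this
  calc (∑ i, (((x + y) i).val : ZMod 8) ^ 2)
      = ∑ i, ((x i).val + (y i).val : ZMod 8) ^ 2 := by
        exact sum_congr rfl fun i _ => carry (x i) (y i)
    _ = (∑ i, ((x i).val : ZMod 8) ^ 2) + (∑ i, ((y i).val : ZMod 8) ^ 2)
        + 2 * ∑ i, ((x i).val : ZMod 8) * ((y i).val : ZMod 8) := by
        rw [mul_sum, ← sum_add_distrib, ← sum_add_distrib]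
        exact sum_congr rfl fun i _ => by ring
    _ = _ := by rw [hs, add_zero]
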